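/- For every real s > 1, ∫₀^∞ h^s · 8 ∑_{n=1}^∞ e^{−2h²n²}(4h³n⁴ − 3hn²) dh = 2^{−s/2} s(s−1) Γ(s/2) ζ(s); equivalently this integral equals 2(π/2)^{s/2} ξ(s), where ξ(s) = (1/2)s(s−1)π^{−s/2}Γ(s/2)ζ(s). -/

import Mathlib

/-!
Each summand of `q₁` is a rescaling `n * g (n * h)` of one kernel `g x = 8 e^{-2x²} (4x³ - 3x)`,
so its `s`-th moment is `n^{-s}` times that of `g`; for `s > 1` these are absolutely summable and
termwise integration produces `ζ(s)`. The moment of `g` is a combination of the Gaussian moments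
`∫₀^∞ x^q e^{-2x²} dx = 2^{-(q+1)/2} Γ((q+1)/2) / 2` at `q = s + 3` and `q = s + 1`, which
`Γ(x+1) = x Γ(x)` collapses to `2^{-s/2} s (s-1) Γ(s/2)`.
-/

open MeasureTheory

/-- The completed zeta factor `ξ(s) = (1/2) s (s-1) π^{-s/2} Γ(s/2) ζ(s)`,
with `ζ(s) = ∑_{n≥1} n^{-s}` (real `s > 1`). -/
noncomputable def xiFun (s : ℝ) : ℝ :=
  (1 / 2) * s * (s - 1) * Real.pi ^ (-s / 2) * Real.Gamma (s / 2) * ∑' n : ℕ+, (n : ℝ) ^ (-s)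

open Real Set

section Scaling

variable {g : ℝ → ℝ} {s c : ℝ}

lemma rpow_mul_mul_comp_mul_eq (hc : 0 < c) {h : ℝ} (hh : 0 < h) :
    h ^ s * (c * g (c * h)) = c ^ (1 - s) * ((c * h) ^ s * g (c * h)) := by
  rw [mul_rpow hc.le hh.le, rpow_sub hc, rpow_one]
  field_simp

lemma integrableOn_rpow_mul_mul_comp_mul (hg : IntegrableOn (fun x ↦ x ^ s * g x) (Ioi 0))
    (hc : 0 < c) : IntegrableOn (fun h ↦ h ^ s * (c * g (c * h))) (Ioi 0) := by
  have hscaled : IntegrableOn (fun h ↦ (c * h) ^ s * g (c * h)) (Ioi 0) := by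
    rwa [integrableOn_Ioi_comp_mul_left_iff (fun x ↦ x ^ s * g x) 0 hc, mul_zero]
  exact IntegrableOn.congr_fun (hscaled.const_mul _)
    (fun h hh ↦ (rpow_mul_mul_comp_mul_eq hc hh).symm) measurableSet_Ioi

lemma integral_rpow_mul_mul_comp_mul (hc : 0 < c) :
    ∫ h in Ioi 0, h ^ s * (c * g (c * h)) = c ^ (-s) * ∫ x in Ioi 0, x ^ s * g x := by
  rw [setIntegral_congr_fun measurableSet_Ioi (fun h hh ↦ rpow_mul_mul_comp_mul_eq hc hh),
    integral_const_mul, integral_comp_mul_left_Ioi (fun x ↦ x ^ s * g x) 0 hc, mul_zero,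
    smul_eq_mul, ← mul_assoc, ← rpow_neg_one, ← rpow_add hc]
  ring_nf

end Scaling

theorem integral_rpow_mul_tsum_mul_comp_mul {g : ℝ → ℝ} {s : ℝ} (hs : 1 < s)
    (hg : IntegrableOn (fun x ↦ x ^ s * g x) (Ioi 0)) :
    ∫ h in Ioi 0, h ^ s * ∑' n : ℕ+, (n : ℝ) * g (n * h)
      = (∑' n : ℕ+, (n : ℝ) ^ (-s)) * ∫ x in Ioi 0, x ^ s * g x := by
  have hn : ∀ n : ℕ+, (0 : ℝ) < n := fun n ↦ by exact_mod_cast n.pos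
  have hint (n : ℕ+) : IntegrableOn (fun h ↦ h ^ s * ((n : ℝ) * g (n * h))) (Ioi 0) :=
    integrableOn_rpow_mul_mul_comp_mul hg (hn n)
  have hnorm (n : ℕ+) : ∫ h in Ioi 0, ‖h ^ s * ((n : ℝ) * g (n * h))‖
      = (n : ℝ) ^ (-s) * ∫ x in Ioi 0, x ^ s * ‖g x‖ := by
    rw [← integral_rpow_mul_mul_comp_mul (g := fun x ↦ ‖g x‖) (hn n)]
    refine setIntegral_congr_fun measurableSet_Ioi (fun h hh ↦ ?_)
    simp [norm_mul, abs_of_nonneg (rpow_nonneg (le_of_lt hh) s)]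
  have hzeta : Summable (fun n : ℕ+ ↦ (n : ℝ) ^ (-s)) :=
    (summable_nat_rpow.mpr (by linarith)).comp_injective PNat.coe_injective
  simp_rw [← tsum_mul_left]
  rw [← integral_tsum_of_summable_integral_norm hint
    (by simpa only [hnorm] using hzeta.mul_right _), ← tsum_mul_right]
  exact tsum_congr fun n ↦ integral_rpow_mul_mul_comp_mul (hn n)

lemma integral_rpow_mul_exp_neg_mul_sq {b q : ℝ} (hb : 0 < b) (hq : -1 < q) :
    ∫ x in Ioi 0, x ^ q * exp (-b * x ^ 2)
      = b ^ (-(q + 1) / 2) * (1 / 2) * Gamma ((q + 1) / 2) := by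
  simpa only [rpow_two] using integral_rpow_mul_exp_neg_mul_rpow two_pos hq hb

/-- `q₁(h) = ∑_{n ≥ 1} n * maxKernel (n * h)`. -/
noncomputable def maxKernel (x : ℝ) : ℝ := 8 * (exp (-2 * x ^ 2) * (4 * x ^ 3 - 3 * x))

lemma mul_maxKernel_mul (c h : ℝ) :
    c * maxKernel (c * h)
      = 8 * (exp (-2 * h ^ 2 * c ^ 2) * (4 * h ^ 3 * c ^ 4 - 3 * h * c ^ 2)) := by
  rw [maxKernel, show -2 * (c * h) ^ 2 = -2 * h ^ 2 * c ^ 2 by ring]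
  ring

lemma rpow_mul_maxKernel_eq {s x : ℝ} (hx : 0 < x) :
    x ^ s * maxKernel x
      = 32 * (x ^ (s + 3) * exp (-2 * x ^ 2)) - 24 * (x ^ (s + 1) * exp (-2 * x ^ 2)) := by
  rw [maxKernel, rpow_add hx, rpow_add hx, rpow_ofNat, rpow_one]
  ring

lemma integrableOn_rpow_mul_maxKernel {s : ℝ} (hs : -2 < s) :
    IntegrableOn (fun x ↦ x ^ s * maxKernel x) (Ioi 0) :=
  IntegrableOn.congr_fun (Integrable.sub
    ((integrableOn_rpow_mul_exp_neg_mul_sq two_pos (by linarith : -1 < s + 3)).const_mul 32)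
    ((integrableOn_rpow_mul_exp_neg_mul_sq two_pos (by linarith : -1 < s + 1)).const_mul 24))
    (fun _ hx ↦ (rpow_mul_maxKernel_eq hx).symm) measurableSet_Ioi

lemma integral_rpow_mul_maxKernel {s : ℝ} (hs : -2 < s) (hs0 : s ≠ 0) :
    ∫ x in Ioi 0, x ^ s * maxKernel x = 2 ^ (-s / 2) * s * (s - 1) * Gamma (s / 2) := by
  rw [setIntegral_congr_fun measurableSet_Ioi (fun x hx ↦ rpow_mul_maxKernel_eq hx),
    integral_sub
      ((integrableOn_rpow_mul_exp_neg_mul_sq two_pos (by linarith : -1 < s + 3)).const_mul 32)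
      ((integrableOn_rpow_mul_exp_neg_mul_sq two_pos (by linarith : -1 < s + 1)).const_mul 24),
    integral_const_mul, integral_const_mul,
    integral_rpow_mul_exp_neg_mul_sq two_pos (by linarith : -1 < s + 3),
    integral_rpow_mul_exp_neg_mul_sq two_pos (by linarith : -1 < s + 1),
    show -(s + 3 + 1) / 2 = -s / 2 - 2 by ring, show -(s + 1 + 1) / 2 = -s / 2 - 1 by ring,
    show (s + 3 + 1) / 2 = s / 2 + 1 + 1 by ring, show (s + 1 + 1) / 2 = s / 2 + 1 by ring,
    rpow_sub two_pos, rpow_sub two_pos, rpow_two, rpow_one,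
    Gamma_add_one (show s / 2 + 1 ≠ 0 by linarith), Gamma_add_one (show s / 2 ≠ 0 by simpa)]
  ring

lemma two_mul_rpow_mul_xiFun (s : ℝ) :
    2 * (π / 2) ^ (s / 2) * xiFun s
      = 2 ^ (-s / 2) * s * (s - 1) * Gamma (s / 2) * ∑' n : ℕ+, (n : ℝ) ^ (-s) := by
  have hpi : (π / 2) ^ (s / 2) * π ^ (-s / 2) = 2 ^ (-s / 2) := by
    rw [div_rpow pi_pos.le zero_le_two, neg_div, rpow_neg pi_pos.le, rpow_neg zero_le_two]
    field_simp
  rw [xiFun, ← hpi]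
  ring

/-- For every real `s > 1`, the `s`-th moment of the maximum of the
three-dimensional Bessel bridge, `∫₀^∞ h^s q₁(h) dh` with
`q₁(h) = 8 ∑_{n≥1} e^{-2h²n²}(4h³n⁴ - 3hn²)`, equals
`2^{-s/2} s (s-1) Γ(s/2) ζ(s)`, which in turn equals `2 (π/2)^{s/2} ξ(s)`. -/
theorem moment_H1 (s : ℝ) (hs : 1 < s) :
    (∫ h in Set.Ioi (0 : ℝ),
        h ^ s * (8 * ∑' n : ℕ+, Real.exp (-2 * h ^ 2 * (n : ℝ) ^ 2) *
          (4 * h ^ 3 * (n : ℝ) ^ 4 - 3 * h * (n : ℝ) ^ 2)))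
      = 2 ^ (-s / 2) * s * (s - 1) * Real.Gamma (s / 2) * (∑' n : ℕ+, (n : ℝ) ^ (-s)) ∧
    (∫ h in Set.Ioi (0 : ℝ),
        h ^ s * (8 * ∑' n : ℕ+, Real.exp (-2 * h ^ 2 * (n : ℝ) ^ 2) *
          (4 * h ^ 3 * (n : ℝ) ^ 4 - 3 * h * (n : ℝ) ^ 2)))
      = 2 * (Real.pi / 2) ^ (s / 2) * xiFun s := by
  have hkernel (h : ℝ) : 8 * ∑' n : ℕ+, exp (-2 * h ^ 2 * (n : ℝ) ^ 2) *
      (4 * h ^ 3 * (n : ℝ) ^ 4 - 3 * h * (n : ℝ) ^ 2) = ∑' n : ℕ+, (n : ℝ) * maxKernel (n * h) := by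
    rw [← tsum_mul_left]
    exact tsum_congr fun n ↦ (mul_maxKernel_mul n h).symm
  have hmoment : (∫ h in Ioi (0 : ℝ),
      h ^ s * (8 * ∑' n : ℕ+, exp (-2 * h ^ 2 * (n : ℝ) ^ 2) *
        (4 * h ^ 3 * (n : ℝ) ^ 4 - 3 * h * (n : ℝ) ^ 2)))
      = 2 ^ (-s / 2) * s * (s - 1) * Gamma (s / 2) * (∑' n : ℕ+, (n : ℝ) ^ (-s)) := by
    simp_rw [hkernel]
    rw [integral_rpow_mul_tsum_mul_comp_mul hs (integrableOn_rpow_mul_maxKernel (by linarith)),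
      integral_rpow_mul_maxKernel (by linarith) (by positivity)]
    ring
  exact ⟨hmoment, hmoment.trans (two_mul_rpow_mul_xiFun s).symm⟩
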